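/- arXiv:2306.08065 — 2 statements merged into one kernel-verified Lean document; each statement's English description precedes it below -/
import Mathlib

section
/- For every permutation σ ∈ Av_n(231), the complement of the descent top set equals the set of right-to-left minima: [n] \ Destop(σ) = RLmin(σ). -/
/-!
A right-to-left minimum is smaller than the entry after it, so it is never a descent top; this
half holds for every permutation. Conversely, suppose `σ(i)` is not a descent top but some later
`σ(j)` is smaller. Then `σ(i) < σ(i+1)`, which forces `j > i + 1`, and `σ(i) σ(i+1) σ(j)` is
an occurrence of `231`.
-/

open scoped Classical

/-- The 1-based `i`-th entry of a permutation `σ` of `{1,…,n}`, as a value in `{1,…,n}`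
(one-line notation `σ(1)…σ(n)`). -/
def entry {n : ℕ} (σ : Equiv.Perm (Fin n)) (i : ℕ) : ℕ :=
  if h : i - 1 < n then (σ ⟨i - 1, h⟩ : ℕ) + 1 else 0

/-- `σ` contains the pattern `π ∈ S_k` (given in 0-based one-line notation as a function):
there is a (not necessarily consecutive) subsequence of `σ` order-isomorphic to `π`. -/
def Contains {n k : ℕ} (π : Fin k → Fin k) (σ : Equiv.Perm (Fin n)) : Prop :=
  ∃ f : Fin k → Fin n, StrictMono f ∧ ∀ i j : Fin k, π i < π j ↔ σ (f i) < σ (f j)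

/-- `σ` avoids the pattern `π`. -/
def AvoidsPat {n k : ℕ} (π : Fin k → Fin k) (σ : Equiv.Perm (Fin n)) : Prop :=
  ¬ Contains π σ

/-- The descent set of `σ` (1-based positions `i ∈ [n-1]` with `σ(i) > σ(i+1)`). -/
def Des {n : ℕ} (σ : Equiv.Perm (Fin n)) : Finset ℕ :=
  (Finset.Icc 1 (n - 1)).filter (fun i => entry σ (i + 1) < entry σ i)

/-- The descent top set of `σ`: `{σ(i) : i ∈ Des σ}`. -/
def Destop {n : ℕ} (σ : Equiv.Perm (Fin n)) : Finset ℕ :=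
  (Des σ).image (entry σ)

/-- The descent bottom set of `σ`: `{σ(i+1) : i ∈ Des σ}`. -/
def Desbot {n : ℕ} (σ : Equiv.Perm (Fin n)) : Finset ℕ :=
  (Des σ).image (fun i => entry σ (i + 1))

/-- The ascent set of `σ` (1-based positions `i ∈ [n-1]` with `σ(i) < σ(i+1)`). -/
def Asc {n : ℕ} (σ : Equiv.Perm (Fin n)) : Finset ℕ :=
  (Finset.Icc 1 (n - 1)).filter (fun i => entry σ i < entry σ (i + 1))

/-- The ascent top set of `σ`: `{σ(i+1) : i ∈ Asc σ}`. -/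
def Asctop {n : ℕ} (σ : Equiv.Perm (Fin n)) : Finset ℕ :=
  (Asc σ).image (fun i => entry σ (i + 1))

/-- The ascent bottom set of `σ`: `{σ(i) : i ∈ Asc σ}`. -/
def Ascbot {n : ℕ} (σ : Equiv.Perm (Fin n)) : Finset ℕ :=
  (Asc σ).image (entry σ)

/-- The set of peak values of `σ`. -/
def Peak {n : ℕ} (σ : Equiv.Perm (Fin n)) : Finset ℕ :=
  Destop σ ∩ Asctop σ

/-- The set of valley values of `σ`. -/
def Val {n : ℕ} (σ : Equiv.Perm (Fin n)) : Finset ℕ :=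
  Desbot σ ∩ Ascbot σ

/-- The set of left-to-right maxima (as values) of `σ`. -/
noncomputable def LRmax {n : ℕ} (σ : Equiv.Perm (Fin n)) : Finset ℕ :=
  ((Finset.Icc 1 n).filter (fun i => ∀ j, 1 ≤ j → j < i → entry σ j < entry σ i)).image (entry σ)

/-- The set of left-to-right minima (as values) of `σ`. -/
noncomputable def LRmin {n : ℕ} (σ : Equiv.Perm (Fin n)) : Finset ℕ :=
  ((Finset.Icc 1 n).filter (fun i => ∀ j, 1 ≤ j → j < i → entry σ i < entry σ j)).image (entry σ)

/-- The set of right-to-left maxima (as values) of `σ`. -/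
noncomputable def RLmax {n : ℕ} (σ : Equiv.Perm (Fin n)) : Finset ℕ :=
  ((Finset.Icc 1 n).filter (fun i => ∀ j, i < j → j ≤ n → entry σ j < entry σ i)).image (entry σ)

/-- The set of right-to-left minima (as values) of `σ`. -/
noncomputable def RLmin {n : ℕ} (σ : Equiv.Perm (Fin n)) : Finset ℕ :=
  ((Finset.Icc 1 n).filter (fun i => ∀ j, i < j → j ≤ n → entry σ i < entry σ j)).image (entry σ)

/-- `(T, B)` is a descent matching: `T` and `B` are finite sets of positive integers
with `|T| = |B| = k`, and writing `T = {t_1 < … < t_k}`, `B = {b_1 < … < b_k}`,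
we have `t_i > b_i` for all `i ∈ [k]`. -/
def DescentMatching (T B : Finset ℕ) : Prop :=
  T.card = B.card ∧ (∀ t ∈ T, 0 < t) ∧ (∀ b ∈ B, 0 < b) ∧
    ∀ i < T.card, (B.sort (· ≤ ·)).getD i 0 < (T.sort (· ≤ ·)).getD i 0

/-- `(2_v 31)σ`: the number of occurrences of the vincular pattern `2-31` in `σ`
in which the "2" has value `v`. -/
def occ2_31at {n : ℕ} (σ : Equiv.Perm (Fin n)) (v : ℕ) : ℕ :=
  ((Finset.Icc 1 (n - 1) ×ˢ Finset.Icc 1 (n - 1)).filter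
    (fun p => p.1 < p.2 ∧ entry σ (p.2 + 1) < entry σ p.2 ∧
      entry σ (p.2 + 1) < entry σ p.1 ∧ entry σ p.1 = v ∧ v < entry σ p.2)).card

/-- `(31 2_v)σ`: the number of occurrences of the vincular pattern `31-2` in `σ`
in which the "2" has value `v`. -/
def occ31_2at {n : ℕ} (σ : Equiv.Perm (Fin n)) (v : ℕ) : ℕ :=
  ((Finset.Icc 1 (n - 1) ×ˢ Finset.Icc 1 n).filter
    (fun p => p.1 + 1 < p.2 ∧ entry σ (p.1 + 1) < entry σ p.1 ∧
      entry σ (p.1 + 1) < entry σ p.2 ∧ entry σ p.2 = v ∧ v < entry σ p.1)).card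

/-- `(2-31)σ`: the number of occurrences of the vincular pattern `2-31` in `σ`. -/
def occ2_31 {n : ℕ} (σ : Equiv.Perm (Fin n)) : ℕ :=
  ((Finset.Icc 1 (n - 1) ×ˢ Finset.Icc 1 (n - 1)).filter
    (fun p => p.1 < p.2 ∧ entry σ (p.2 + 1) < entry σ p.2 ∧
      entry σ (p.2 + 1) < entry σ p.1 ∧ entry σ p.1 < entry σ p.2)).card

/-- `(31-2)σ`: the number of occurrences of the vincular pattern `31-2` in `σ`. -/
def occ31_2 {n : ℕ} (σ : Equiv.Perm (Fin n)) : ℕ :=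
  ((Finset.Icc 1 (n - 1) ×ˢ Finset.Icc 1 n).filter
    (fun p => p.1 + 1 < p.2 ∧ entry σ (p.1 + 1) < entry σ p.1 ∧
      entry σ (p.1 + 1) < entry σ p.2 ∧ entry σ p.2 < entry σ p.1)).card

/-- The signature function `sg_{(T,B)}(i) = |B_{<i}| - |T_{≤i}| + 1`. -/
def sg (T B : Finset ℕ) (i : ℕ) : ℕ :=
  (B.filter (fun b => b < i)).card - (T.filter (fun t => t ≤ i)).card + 1

/-- The `(p,q)`-integer `[m]_{p,q} = Σ_{a+b=m-1} p^a q^b`. -/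
def genQInt {R : Type*} [CommRing R] (m : ℕ) (p q : R) : R :=
  ∑ a ∈ Finset.range m, p ^ a * q ^ (m - 1 - a)

/-- The reverse complement of `σ`: `σ^{rc}(i) = n + 1 - σ(n + 1 - i)`. -/
def revComp {n : ℕ} (σ : Equiv.Perm (Fin n)) : Equiv.Perm (Fin n) :=
  (Fin.revPerm.trans σ).trans Fin.revPerm

open Finset

section

variable {n : ℕ} (σ : Equiv.Perm (Fin n))

def IsDescentAt (i : Fin n) : Prop :=
  ∃ h : (i : ℕ) + 1 < n, σ ⟨i + 1, h⟩ < σ i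

def IsRLMinAt (i : Fin n) : Prop :=
  ∀ j, i < j → σ i < σ j

theorem entry_add_one {k : ℕ} (hk : k < n) : entry σ (k + 1) = σ ⟨k, hk⟩ + 1 := by
  simp [entry, hk]

theorem entry_succ (i : Fin n) : entry σ (i + 1) = σ i + 1 :=
  entry_add_one σ i.isLt

theorem entry_eq_succ_iff {k : ℕ} (hk : 1 ≤ k) (i : Fin n) :
    entry σ k = σ i + 1 ↔ k = i + 1 := by
  unfold entry
  split_ifs with h
  · rw [Nat.add_right_cancel_iff, ← Fin.ext_iff, σ.injective.eq_iff, Fin.ext_iff, Fin.val_mk]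
    omega
  · have := i.isLt
    exact iff_of_false id (by omega)

theorem val_succ_mem_destop_iff (i : Fin n) :
    (σ i : ℕ) + 1 ∈ Destop σ ↔ IsDescentAt σ i := by
  simp only [Destop, Des, mem_image, mem_filter, mem_Icc]
  constructor
  · rintro ⟨k, ⟨⟨hk1, hkn⟩, hdesc⟩, hk⟩
    obtain rfl := (entry_eq_succ_iff σ hk1 i).1 hk
    have hi : (i : ℕ) + 1 < n := by omega
    rw [entry_add_one σ hi, entry_succ, Nat.add_lt_add_iff_right, Fin.val_fin_lt] at hdesc
    exact ⟨hi, hdesc⟩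
  · rintro ⟨hi, hdesc⟩
    refine ⟨i + 1, ⟨⟨by omega, by omega⟩, ?_⟩, entry_succ σ i⟩
    rwa [entry_add_one σ hi, entry_succ, Nat.add_lt_add_iff_right, Fin.val_fin_lt]

theorem val_succ_mem_rlmin_iff (i : Fin n) :
    (σ i : ℕ) + 1 ∈ RLmin σ ↔ IsRLMinAt σ i := by
  simp only [RLmin, mem_image, mem_filter, mem_Icc]
  constructor
  · rintro ⟨k, ⟨⟨hk1, hkn⟩, hmin⟩, hk⟩
    obtain rfl := (entry_eq_succ_iff σ hk1 i).1 hk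
    intro j hij
    have := hmin (j + 1) (by rw [Fin.lt_def] at hij; omega) j.isLt
    rwa [entry_succ, entry_succ, Nat.add_lt_add_iff_right, Fin.val_fin_lt] at this
  · intro hmin
    refine ⟨i + 1, ⟨⟨by omega, i.isLt⟩, fun k hik hkn => ?_⟩, entry_succ σ i⟩
    obtain ⟨k, rfl⟩ : ∃ k', k = k' + 1 := ⟨k - 1, by omega⟩
    rw [entry_succ, entry_add_one σ (by omega), Nat.add_lt_add_iff_right, Fin.val_fin_lt]
    exact hmin ⟨k, by omega⟩ (Fin.lt_def.2 (show (i : ℕ) < k by omega))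

theorem rlmin_subset_Icc : RLmin σ ⊆ Icc 1 n := by
  intro v hv
  simp only [RLmin, mem_image, mem_filter, mem_Icc] at hv
  obtain ⟨k, ⟨⟨hk1, hkn⟩, -⟩, rfl⟩ := hv
  simp [entry, show k - 1 < n by omega]

theorem exists_val_succ_eq {v : ℕ} (hv : v ∈ Icc 1 n) : ∃ i, (σ i : ℕ) + 1 = v := by
  rw [mem_Icc] at hv
  exact ⟨σ.symm ⟨v - 1, by omega⟩, by simp; omega⟩

theorem IsRLMinAt.not_isDescentAt {σ : Equiv.Perm (Fin n)} {i : Fin n} (hi : IsRLMinAt σ i) :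
    ¬IsDescentAt σ i := fun ⟨h, hdesc⟩ =>
  (hi ⟨i + 1, h⟩ (Fin.lt_def.2 (Nat.lt_succ_self _))).not_gt hdesc

theorem contains_231_of_lt {i j k : Fin n} (hij : i < j) (hjk : j < k) (hσki : σ k < σ i)
    (hσij : σ i < σ j) : Contains (![1, 2, 0] : Fin 3 → Fin 3) σ := by
  refine ⟨![i, j, k], ?_, ?_⟩
  · rw [Fin.strictMono_iff_lt_succ]
    intro a
    fin_cases a <;> simpa
  · have hσkj := hσki.trans hσij
    intro a b
    fin_cases a <;> fin_cases b <;>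
      simp [hσki, hσij, hσkj, hσki.not_gt, hσij.not_gt, hσkj.not_gt]

theorem isRLMinAt_of_not_isDescentAt (h : AvoidsPat (![1, 2, 0] : Fin 3 → Fin 3) σ) {i : Fin n}
    (hi : ¬IsDescentAt σ i) : IsRLMinAt σ i := by
  intro j hij
  by_contra! hji
  have hlt : σ j < σ i := hji.lt_of_ne (σ.injective.ne hij.ne')
  have hsucc : (i : ℕ) + 1 < n := by rw [Fin.lt_def] at hij; omega
  set i' : Fin n := ⟨i + 1, hsucc⟩
  have hii' : i < i' := Fin.lt_def.2 (Nat.lt_succ_self _)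
  have hasc : σ i < σ i' :=
    (not_lt.1 fun hdesc => hi ⟨hsucc, hdesc⟩).lt_of_ne (σ.injective.ne hii'.ne)
  have hi'j : i' < j := by
    refine lt_of_le_of_ne (Fin.le_def.2 (Fin.lt_def.1 hij)) ?_
    rintro rfl
    exact hlt.not_gt hasc
  exact h (contains_231_of_lt σ hii' hi'j hlt hasc)

end

/-- For `σ ∈ Av_n(231)`, `[n] \ Destop σ = RLmin σ`. -/
theorem compl_destop_eq_rlmin_of_avoids231 (n : ℕ) (σ : Equiv.Perm (Fin n))
    (h : AvoidsPat (![1, 2, 0] : Fin 3 → Fin 3) σ) :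
    Finset.Icc 1 n \ Destop σ = RLmin σ := by
  ext v
  by_cases hv : v ∈ Icc 1 n
  · obtain ⟨i, rfl⟩ := exists_val_succ_eq σ hv
    rw [mem_sdiff, val_succ_mem_destop_iff, val_succ_mem_rlmin_iff]
    exact ⟨fun ⟨_, hi⟩ => isRLMinAt_of_not_isDescentAt σ h hi,
      fun hi => ⟨hv, hi.not_isDescentAt⟩⟩
  · exact iff_of_false (fun h' => hv (mem_sdiff.1 h').1) (fun h' => hv (rlmin_subset_Icc σ h'))
end

section
/- For every permutation σ ∈ S_n and every i ∈ [n], (2_i31)σ + (31 2_i)σ + |{t ∈ Destop(σ) : t ≤ i}| = |{b ∈ Desbot(σ) : b < i}|. Equivalently, if T = Destop(σ) and B = Desbot(σ), then (2_i31)σ + (31 2_i)σ = sg_{n,(T,B)}(i) − 1. -/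
open scoped Classical

/-! Let `p` be the position with `σ(p) = i`. An occurrence of `2_i31` or of `31 2_i` is
determined by its descent `m`, which satisfies `σ(m+1) < i < σ(m)` and lies entirely to the
right, resp. left, of `p`. Conversely, a descent with bottom below `i` either has top `≤ i` or
straddles the value `i`; then `p ≠ m, m + 1`, so it is of exactly one of the two kinds. Descent
tops and bottoms are injective images of the descent positions, so it suffices to count
positions. -/

section Descents

variable {n : ℕ} (σ : Equiv.Perm (Fin n))

lemma entry_injOn : Set.InjOn (entry σ) (Set.Icc 1 n) := by
  intro a ⟨ha1, han⟩ b ⟨hb1, hbn⟩ h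
  have ha : a - 1 < n := by omega
  have hb : b - 1 < n := by omega
  simp only [entry, dif_pos ha, dif_pos hb, add_left_inj, Fin.val_inj,
    EmbeddingLike.apply_eq_iff_eq, Fin.mk.injEq] at h
  omega

lemma exists_entry_eq {i : ℕ} (hi : i ∈ Finset.Icc 1 n) :
    ∃ p ∈ Finset.Icc 1 n, entry σ p = i := by
  obtain ⟨hi1, hin⟩ := Finset.mem_Icc.mp hi
  refine ⟨σ.symm ⟨i - 1, by omega⟩ + 1,
    Finset.mem_Icc.mpr ⟨by omega, (σ.symm ⟨i - 1, by omega⟩).isLt⟩, ?_⟩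
  simp only [entry, Nat.add_sub_cancel, Fin.is_lt, dif_pos, Fin.eta, Equiv.apply_symm_apply]
  omega

lemma mem_Des_iff {m : ℕ} :
    m ∈ Des σ ↔ (1 ≤ m ∧ m ≤ n - 1) ∧ entry σ (m + 1) < entry σ m := by
  simp [Des]

lemma card_filter_Destop (P : ℕ → Prop) [DecidablePred P] :
    ((Destop σ).filter P).card = ((Des σ).filter (fun m => P (entry σ m))).card := by
  rw [Destop, Finset.filter_image]
  refine Finset.card_image_of_injOn ((entry_injOn σ).mono fun m hm => ?_)
  have := ((mem_Des_iff σ).mp (Finset.mem_filter.mp hm).1).1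
  exact ⟨this.1, by omega⟩

lemma card_filter_Desbot (P : ℕ → Prop) [DecidablePred P] :
    ((Desbot σ).filter P).card = ((Des σ).filter (fun m => P (entry σ (m + 1)))).card := by
  rw [Desbot, Finset.filter_image]
  refine Finset.card_image_of_injOn fun a ha b hb h => ?_
  have ha' := ((mem_Des_iff σ).mp (Finset.mem_filter.mp ha).1).1
  have hb' := ((mem_Des_iff σ).mp (Finset.mem_filter.mp hb).1).1
  have := entry_injOn σ (x₁ := a + 1) (x₂ := b + 1)
    ⟨by omega, by omega⟩ ⟨by omega, by omega⟩ h
  omega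

lemma card_filter_Des_bot_lt_entry_eq_add (p : ℕ) :
    ((Des σ).filter (fun m => entry σ (m + 1) < entry σ p)).card =
      ((Des σ).filter (fun m => entry σ m ≤ entry σ p)).card +
      ((Des σ).filter (fun m =>
        p < m ∧ entry σ (m + 1) < entry σ p ∧ entry σ p < entry σ m)).card +
      ((Des σ).filter (fun m =>
        m + 1 < p ∧ entry σ (m + 1) < entry σ p ∧ entry σ p < entry σ m)).card := by
  have hsplit : (Des σ).filter (fun m => entry σ (m + 1) < entry σ p) =
      (Des σ).filter (fun m => (entry σ m ≤ entry σ p ∨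
        p < m ∧ entry σ (m + 1) < entry σ p ∧ entry σ p < entry σ m) ∨
        m + 1 < p ∧ entry σ (m + 1) < entry σ p ∧ entry σ p < entry σ m) := by
    refine Finset.filter_congr fun m hm => ?_
    have hdes := ((mem_Des_iff σ).mp hm).2
    constructor
    · intro hbot
      by_cases htop : entry σ m ≤ entry σ p
      · exact Or.inl (Or.inl htop)
      · have : p ≠ m := fun h => htop (h ▸ le_rfl)
        have : p ≠ m + 1 := fun h => (h ▸ hbot).false
        omega
    · omega
  rw [hsplit, Finset.filter_or, Finset.card_union_of_disjoint, Finset.filter_or,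
    Finset.card_union_of_disjoint]
  all_goals
    rw [Finset.disjoint_filter]
    intro m _ h h'
    omega

variable {σ} {p : ℕ}

lemma occ2_31at_entry_eq_card (hp : p ∈ Finset.Icc 1 n) :
    occ2_31at σ (entry σ p) = ((Des σ).filter (fun m =>
      p < m ∧ entry σ (m + 1) < entry σ p ∧ entry σ p < entry σ m)).card := by
  obtain ⟨hp1, hpn⟩ := Finset.mem_Icc.mp hp
  suffices h : (Finset.Icc 1 (n - 1) ×ˢ Finset.Icc 1 (n - 1)).filter (fun q =>
      q.1 < q.2 ∧ entry σ (q.2 + 1) < entry σ q.2 ∧ entry σ (q.2 + 1) < entry σ q.1 ∧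
        entry σ q.1 = entry σ p ∧ entry σ p < entry σ q.2) =
      {p} ×ˢ (Des σ).filter (fun m =>
        p < m ∧ entry σ (m + 1) < entry σ p ∧ entry σ p < entry σ m) by
    rw [occ2_31at, h, Finset.card_product, Finset.card_singleton, one_mul]
  ext ⟨j, m⟩
  simp only [Finset.mem_filter, Finset.mem_product, Finset.mem_Icc, Finset.mem_singleton,
    mem_Des_iff]
  constructor
  · rintro ⟨⟨hj, hm⟩, hjm, hdes, hbot, hj_eq, htop⟩
    obtain rfl : j = p := entry_injOn σ ⟨hj.1, by omega⟩ ⟨hp1, hpn⟩ hj_eq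
    exact ⟨rfl, ⟨hm, hdes⟩, hjm, hj_eq ▸ hbot, htop⟩
  · rintro ⟨rfl, ⟨hm, hdes⟩, hjm, hbot, htop⟩
    exact ⟨⟨⟨hp1, by omega⟩, hm⟩, hjm, hdes, hbot, rfl, htop⟩

lemma occ31_2at_entry_eq_card (hp : p ∈ Finset.Icc 1 n) :
    occ31_2at σ (entry σ p) = ((Des σ).filter (fun m =>
      m + 1 < p ∧ entry σ (m + 1) < entry σ p ∧ entry σ p < entry σ m)).card := by
  obtain ⟨hp1, hpn⟩ := Finset.mem_Icc.mp hp
  suffices h : (Finset.Icc 1 (n - 1) ×ˢ Finset.Icc 1 n).filter (fun q =>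
      q.1 + 1 < q.2 ∧ entry σ (q.1 + 1) < entry σ q.1 ∧ entry σ (q.1 + 1) < entry σ q.2 ∧
        entry σ q.2 = entry σ p ∧ entry σ p < entry σ q.1) =
      (Des σ).filter (fun m =>
        m + 1 < p ∧ entry σ (m + 1) < entry σ p ∧ entry σ p < entry σ m) ×ˢ {p} by
    rw [occ31_2at, h, Finset.card_product, Finset.card_singleton, mul_one]
  ext ⟨m, j⟩
  simp only [Finset.mem_filter, Finset.mem_product, Finset.mem_Icc, Finset.mem_singleton,
    mem_Des_iff]
  constructor
  · rintro ⟨⟨hm, hj⟩, hmj, hdes, hbot, hj_eq, htop⟩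
    obtain rfl : j = p := entry_injOn σ hj ⟨hp1, hpn⟩ hj_eq
    exact ⟨⟨⟨hm, hdes⟩, hmj, hj_eq ▸ hbot, htop⟩, rfl⟩
  · rintro ⟨⟨⟨hm, hdes⟩, hmj, hbot, htop⟩, rfl⟩
    exact ⟨⟨hm, hp1, hpn⟩, hmj, hdes, hbot, rfl, htop⟩

end Descents

/-- For every `σ ∈ S_n` and `i ∈ [n]`,
`(2_i31)σ + (31 2_i)σ + |Destop(σ)_{≤i}| = |Desbot(σ)_{<i}|`,
i.e. `(2_i31)σ + (31 2_i)σ = sg_{n,(T,B)}(i) − 1`. -/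
theorem occ_at_add_eq_signature (n : ℕ) (σ : Equiv.Perm (Fin n)) (i : ℕ)
    (hi : i ∈ Finset.Icc 1 n) :
    occ2_31at σ i + occ31_2at σ i + ((Destop σ).filter (fun t => t ≤ i)).card =
      ((Desbot σ).filter (fun b => b < i)).card := by
  obtain ⟨p, hp, rfl⟩ := exists_entry_eq σ hi
  rw [occ2_31at_entry_eq_card hp, occ31_2at_entry_eq_card hp, card_filter_Destop,
    card_filter_Desbot, card_filter_Des_bot_lt_entry_eq_add]
  omega
end
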